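/- arXiv:2205.10242 — 4 statements merged into one kernel-verified Lean document; each statement's English description precedes it below -/
import Mathlib

section
/- Let T ≥ 1, let ν : ℕ → ℝ be a kernel, and let f' : Fin T → ℝ be given (scalar case of the surrogate gradient). Fix m ∈ Fin T and define σ : Fin T → ℝ recursively by: σ n = 0 for n < m; σ m = f' m; and σ n = f' n · Σ_{k=m}^{n-1} ν (n-1-k) · σ k for n > m. Then σ satisfies, for every n, the linear system σ n - f' n · Σ_{k=0}^{n-1} ν (n-1-k) · σ k = (if n = m then f' n else 0). -/
/-- The forward-substitution recursion for σ solves the linear system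
(I - f'·ν₋₁)·σ = f'·e_m. -/
theorem stmt_3 (T : ℕ) (hT : 1 ≤ T) (ν : ℕ → ℝ) (f' : ℕ → ℝ) (m : ℕ) (hm : m < T)
    (σ : ℕ → ℝ)
    (h0 : ∀ n, n < m → σ n = 0)
    (hmm : σ m = f' m)
    (hrec : ∀ n, m < n → n < T →
      σ n = f' n * ∑ k ∈ Finset.Ico m n, ν (n - 1 - k) * σ k) :
    ∀ n, n < T →
      σ n - f' n * ∑ k ∈ Finset.range n, ν (n - 1 - k) * σ k =
        if n = m then f' n else 0 := by
  intro n hn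
  rcases lt_trichotomy n m with h | h | h
  · have hs : ∀ k ∈ Finset.range n, ν (n - 1 - k) * σ k = 0 := by
      intro k hk
      rw [h0 k (lt_trans (Finset.mem_range.mp hk) h), mul_zero]
    rw [Finset.sum_eq_zero hs, h0 n h, if_neg (Nat.ne_of_lt h)]
    ring
  · subst h
    have hs : ∀ k ∈ Finset.range n, ν (n - 1 - k) * σ k = 0 := by
      intro k hk
      rw [h0 k (Finset.mem_range.mp hk), mul_zero]
    rw [Finset.sum_eq_zero hs, if_pos rfl, hmm]
    ring
  · have hsplit : Finset.range n = Finset.range m ∪ Finset.Ico m n := by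
      rw [Finset.range_eq_Ico, Finset.range_eq_Ico,
        Finset.Ico_union_Ico_eq_Ico (Nat.zero_le m) h.le]
    have hdisj : Disjoint (Finset.range m) (Finset.Ico m n) := by
      rw [Finset.range_eq_Ico]
      exact Finset.Ico_disjoint_Ico_consecutive 0 m n
    rw [hsplit, Finset.sum_union hdisj,
      Finset.sum_eq_zero (fun k hk => by
        rw [h0 k (Finset.mem_range.mp hk), mul_zero]),
      zero_add, if_neg (Nat.ne_of_gt h), hrec n h hn]
    ring
end

section
/- Let α, θ ∈ ℝ and let f' : ℕ → ℝ. Fix m ∈ ℕ and define γ : ℕ → ℝ by γ n = 0 for n < m, γ m = 1, and for n > m, γ n = -θ · Σ_{k=m}^{n-1} α^(n-1-k) · (f' k · γ k). Then for all n ≥ m+1, γ n = -θ · f' m · ∏_{k=m+1}^{n-1} (α - θ · f' k), where the empty product (when n = m+1) equals 1. -/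
/-- Closed-form product expression for the auxiliary variable γ in the LIF case. -/
theorem stmt_5 (α θ : ℝ) (f' : ℕ → ℝ) (m : ℕ) (γ : ℕ → ℝ)
    (h0 : ∀ n, n < m → γ n = 0)
    (hm : γ m = 1)
    (hrec : ∀ n, m < n →
      γ n = -θ * ∑ k ∈ Finset.Ico m n, α ^ (n - 1 - k) * (f' k * γ k)) :
    ∀ n, m + 1 ≤ n →
      γ n = -θ * f' m * ∏ k ∈ Finset.Ico (m + 1) n, (α - θ * f' k) := by
  intro n hn
  induction n, hn using Nat.le_induction with
  | base =>
    rw [hrec (m+1) (by omega)]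
    simp [hm]
  | succ n hn ih =>
    have hstep : γ (n+1) = (α - θ * f' n) * γ n := by
      have hS := hrec n (by omega)
      rw [hrec (n+1) (by omega), Finset.sum_Ico_succ_top (by omega)]
      have hrw : ∀ k ∈ Finset.Ico m n,
          α ^ (n+1-1-k) * (f' k * γ k) = α * (α ^ (n-1-k) * (f' k * γ k)) := by
        intro k hk
        simp only [Finset.mem_Ico] at hk
        have h1 : n+1-1-k = (n-1-k)+1 := by omega
        rw [h1, pow_succ]; ring
      rw [Finset.sum_congr rfl hrw, ← Finset.mul_sum]
      have h2 : n+1-1-n = 0 := by omega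
      rw [h2]
      linear_combination -α * hS
    rw [hstep, ih, Finset.prod_Ico_succ_top (by omega)]
    ring
end

section
/- Let α, θ ∈ ℝ, f' : ℕ → ℝ, and m ∈ ℕ. Define σ : ℕ → ℝ by σ n = 0 for n < m, σ m = f' m, and σ n = f' n · (-θ) · Σ_{k=m}^{n-1} α^(n-1-k) · σ k for n > m. Then σ (m+1) = -θ · f' m · f' (m+1), and for all n ≥ m+2, σ n = -θ · f' m · f' n · ∏_{k=m+1}^{n-1} (α - θ · f' k). -/
/-- Scalar closed-form LIF gradient formula. -/
theorem stmt_6 (α θ : ℝ) (f' : ℕ → ℝ) (m : ℕ) (σ : ℕ → ℝ)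
    (h0 : ∀ n, n < m → σ n = 0)
    (hm : σ m = f' m)
    (hrec : ∀ n, m < n →
      σ n = f' n * (-θ) * ∑ k ∈ Finset.Ico m n, α ^ (n - 1 - k) * σ k) :
    σ (m + 1) = -θ * f' m * f' (m + 1) ∧
      ∀ n, m + 2 ≤ n →
        σ n = -θ * f' m * f' n * ∏ k ∈ Finset.Ico (m + 1) n, (α - θ * f' k) := by
  -- Define the running sum S
  set S : ℕ → ℝ := fun n => ∑ k ∈ Finset.Ico m n, α ^ (n - 1 - k) * σ k with hS
  have hSm1 : S (m + 1) = f' m := by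
    simp [hS, Nat.Ico_succ_singleton, hm]
  have hσS : ∀ n, m < n → σ n = -θ * f' n * S n := by
    intro n hn
    rw [hrec n hn, hS]
    ring
  have hstep : ∀ n, m + 1 ≤ n → S (n + 1) = (α - θ * f' n) * S n := by
    intro n hn
    have hsum : S (n + 1) = α * S n + σ n := by
      simp only [hS]
      rw [Finset.sum_Ico_succ_top (by omega : m ≤ n), Finset.mul_sum]
      congr 1
      · apply Finset.sum_congr rfl
        intro k hk
        have hk' : k < n := (Finset.mem_Ico.mp hk).2
        have he : n + 1 - 1 - k = (n - 1 - k) + 1 := by omega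
        rw [he, pow_succ]
        ring
      · have he : n + 1 - 1 - n = 0 := by omega
        rw [he]; simp
    rw [hsum, hσS n (by omega)]
    ring
  have hSform : ∀ n, m + 1 ≤ n →
      S n = f' m * ∏ k ∈ Finset.Ico (m + 1) n, (α - θ * f' k) := by
    intro n hn
    induction n with
    | zero => omega
    | succ n ih =>
      rcases Nat.lt_or_ge m n with h | h
      · rw [hstep n h, ih h, Finset.prod_Ico_succ_top (by omega : m + 1 ≤ n)]
        ring
      · have hnm : n = m := by omega
        subst hnm
        rw [hSm1]
        simp
  constructor
  · rw [hσS (m + 1) (by omega), hSm1]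
    ring
  · intro n hn
    rw [hσS n (by omega), hSform n (by omega)]
    ring
end

section
/- Let ν₋₁ be the T·N × T·N block matrix with blocks (ν₋₁)_{n,k} = -ν_{n-1-k} · I_N for k ≤ n-1 and 0 otherwise (strictly block lower triangular), and let F be the block diagonal matrix with diagonal blocks f'[n] (each f'[n] an N×N diagonal matrix). Then the 2×2 block matrix J = [[I_{TN}, -F],[ν₋₁, I_{TN}]] is invertible. -/
/-- Invertibility of the full layer Jacobian J = [[I, -F],[ν₋₁, I]], where
ν₋₁ is strictly block lower triangular and F is block diagonal with diagonal
blocks. -/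
theorem stmt_16 (T N : ℕ) (ν : ℕ → ℝ) (d : Fin T → Fin N → ℝ)
    (νm F : Matrix (Fin T × Fin N) (Fin T × Fin N) ℝ)
    (hν : ∀ (n k : Fin T) (i j : Fin N),
      νm (n, i) (k, j) =
        if (k : ℕ) < (n : ℕ) ∧ i = j then -ν ((n : ℕ) - 1 - (k : ℕ)) else 0)
    (hF : ∀ (n k : Fin T) (i j : Fin N),
      F (n, i) (k, j) = if n = k ∧ i = j then d n i else 0) :
    IsUnit (Matrix.fromBlocks 1 (-F) νm 1) := by
  set M := νm * F with hM
  -- M is strictly block lower triangular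
  have hMz : ∀ (x y : Fin T × Fin N), (x.1 : ℕ) ≤ (y.1 : ℕ) → M x y = 0 := by
    rintro ⟨n, i⟩ ⟨k, j⟩ h
    simp only [hM, Matrix.mul_apply]
    apply Finset.sum_eq_zero
    rintro ⟨m1, m2⟩ _
    rcases eq_or_ne (m1, m2) (k, j) with he | he
    · rw [he, hν]
      have : ¬((k : ℕ) < (n : ℕ) ∧ i = j) := fun hc => absurd hc.1 (not_lt.2 h)
      rw [if_neg this, zero_mul]
    · rw [hF]
      have : ¬(m1 = k ∧ m2 = j) := by
        intro hc; exact he (Prod.ext hc.1 hc.2)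
      rw [if_neg this, mul_zero]
  -- powers of M vanish strictly
  have hpow : ∀ (m : ℕ) (x y : Fin T × Fin N), (x.1 : ℕ) < (y.1 : ℕ) + m →
      (M ^ m) x y = 0 := by
    intro m
    induction m with
    | zero =>
      intro x y h
      rw [pow_zero, Matrix.one_apply_ne]
      intro he; rw [he] at h; omega
    | succ m ih =>
      intro x y h
      rw [pow_succ, Matrix.mul_apply]
      apply Finset.sum_eq_zero
      intro z _
      rcases le_or_gt (z.1 : ℕ) (y.1 : ℕ) with hz | hz
      · rw [hMz z y hz, mul_zero]
      · rw [ih x z (by omega), zero_mul]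
  have hnil : IsNilpotent M := ⟨T, by
    ext x y
    rw [hpow T x y (by have := y.1.isLt; have := x.1.isLt; omega)]
    simp⟩
  have hunit : IsUnit (1 + M) := hnil.isUnit_one_add
  rw [Matrix.isUnit_iff_isUnit_det, Matrix.det_fromBlocks_one₁₁]
  have : (1 : Matrix (Fin T × Fin N) (Fin T × Fin N) ℝ) - νm * (-F) = 1 + M := by
    rw [Matrix.mul_neg, sub_neg_eq_add, hM]
  rw [this, ← Matrix.isUnit_iff_isUnit_det]
  exact hunit
end
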